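/- In the search tree setting, let π* be a deterministic optimal policy and let s_0*, s_1*, …, s_{H−1}* be the non-leaf nodes on the root-to-leaf path followed by π*. Then for any policies π^(1), …, π^(T): Σ_{t=1}^T (V^{π*}(root) − V^{π^(t)}(root)) = Σ_{h=0}^{H−1} Σ_{t=1}^T Σ_{a ∈ Fin B} Q^{π^(t)}(s_h*, a) · (π*(a | s_h*) − π^(t)(a | s_h*)). -/

import Mathlib

open scoped BigOperators

/-- Value function on the search tree: `treeValue B R π n s` is the expected reward
`V^π(s)` of a node `s` with remaining depth (fuel) `n`; a node of height `h` in a tree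
of height `H` is evaluated with fuel `n = H - h`. -/
noncomputable def treeValue (B : ℕ) (R : List (Fin B) → ℝ)
    (π : List (Fin B) → Fin B → ℝ) : ℕ → List (Fin B) → ℝ
  | 0, s => R s
  | n + 1, s => ∑ a : Fin B, π s a * treeValue B R π n (s ++ [a])

/-- `π` is a policy for a tree of height `H`: it assigns a probability distribution
on `Fin B` to every non-leaf node. -/
def IsPolicy (B H : ℕ) (π : List (Fin B) → Fin B → ℝ) : Prop :=
  ∀ s : List (Fin B), s.length < H → (∀ a, 0 ≤ π s a) ∧ ∑ a, π s a = 1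

/-- The deterministic policy putting point mass on the action `act s` at each node. -/
def detPolicy (B : ℕ) (act : List (Fin B) → Fin B) : List (Fin B) → Fin B → ℝ :=
  fun s a => if a = act s then 1 else 0

/-- `optPath B act h` is the node `s_h^*` of height `h` obtained by following the
deterministic policy given by `act` from the root. -/
def optPath (B : ℕ) (act : List (Fin B) → Fin B) : ℕ → List (Fin B)
  | 0 => []
  | h + 1 => optPath B act h ++ [act (optPath B act h)]


lemma detValue (B : ℕ) (R : List (Fin B) → ℝ) (act : List (Fin B) → Fin B) :
    ∀ n h, treeValue B R (detPolicy B act) n (optPath B act h)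
      = R (optPath B act (h + n)) := by
  intro n
  induction n with
  | zero => intro h; simp [treeValue]
  | succ n ih =>
    intro h
    rw [treeValue]
    have hs : ∀ a : Fin B,
        detPolicy B act (optPath B act h) a
          * treeValue B R (detPolicy B act) n (optPath B act h ++ [a])
        = if a = act (optPath B act h) then
            treeValue B R (detPolicy B act) n (optPath B act h ++ [a]) else 0 := by
      intro a; simp [detPolicy]
    rw [Finset.sum_congr rfl (fun a _ => hs a), Finset.sum_ite_eq']
    simp only [Finset.mem_univ, if_true]
    have : optPath B act h ++ [act (optPath B act h)] = optPath B act (h + 1) := rfl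
    rw [this, ih (h + 1)]
    have heq : h + 1 + n = h + (n + 1) := by omega
    rw [heq]

lemma perPolicy (B H : ℕ) (R : List (Fin B) → ℝ) (act : List (Fin B) → Fin B)
    (π : List (Fin B) → Fin B → ℝ) :
    treeValue B R (detPolicy B act) H [] - treeValue B R π H []
      = ∑ h ∈ Finset.range H, ∑ a : Fin B,
          treeValue B R π (H - h - 1) (optPath B act h ++ [a]) *
            (detPolicy B act (optPath B act h) a - π (optPath B act h) a) := by
  have key : ∀ h ∈ Finset.range H,
      (∑ a : Fin B,
          treeValue B R π (H - h - 1) (optPath B act h ++ [a]) *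
            (detPolicy B act (optPath B act h) a - π (optPath B act h) a))
      = treeValue B R π (H - (h + 1)) (optPath B act (h + 1))
        - treeValue B R π (H - h) (optPath B act h) := by
    intro h hh
    rw [Finset.mem_range] at hh
    obtain ⟨k, hk⟩ : ∃ k, H - h = k + 1 := ⟨H - h - 1, by omega⟩
    have hk1 : H - h - 1 = k := by omega
    have hk2 : H - (h + 1) = k := by omega
    rw [hk1, hk2, hk, treeValue]
    have hsp : optPath B act (h + 1) = optPath B act h ++ [act (optPath B act h)] := rfl
    rw [hsp]
    rw [Finset.sum_congr rfl (fun a _ => mul_sub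
      (treeValue B R π k (optPath B act h ++ [a])) _ _)]
    rw [Finset.sum_sub_distrib]
    congr 1
    · have hs : ∀ a : Fin B,
          treeValue B R π k (optPath B act h ++ [a])
            * detPolicy B act (optPath B act h) a
          = if a = act (optPath B act h) then
              treeValue B R π k (optPath B act h ++ [a]) else 0 := by
        intro a; simp [detPolicy]
      rw [Finset.sum_congr rfl (fun a _ => hs a), Finset.sum_ite_eq']
      simp
    · exact Finset.sum_congr rfl (fun a _ => mul_comm _ _)
  rw [Finset.sum_congr rfl key, Finset.sum_range_sub (fun h => treeValue B R π (H - h) (optPath B act h))]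
  have h1 : treeValue B R π (H - H) (optPath B act H) = R (optPath B act H) := by
    simp [treeValue]
  have h2 : treeValue B R (detPolicy B act) H [] = R (optPath B act H) := by
    have := detValue B R act H 0
    simpa [optPath] using this
  simp only [Nat.sub_self] at h1 ⊢
  rw [h1, h2]
  simp [optPath]

theorem stmt3 (B H T : ℕ) (hB : 2 ≤ B) (hH : 1 ≤ H)
    (R : List (Fin B) → ℝ)
    (hR : ∀ s : List (Fin B), s.length = H → 0 ≤ R s ∧ R s ≤ 1)
    (act : List (Fin B) → Fin B)
    (hopt : ∀ π : List (Fin B) → Fin B → ℝ, IsPolicy B H π →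
      treeValue B R π H [] ≤ treeValue B R (detPolicy B act) H [])
    (πt : ℕ → List (Fin B) → Fin B → ℝ) (hπt : ∀ t, IsPolicy B H (πt t)) :
    ∑ t ∈ Finset.range T,
        (treeValue B R (detPolicy B act) H [] - treeValue B R (πt t) H []) =
      ∑ h ∈ Finset.range H, ∑ t ∈ Finset.range T, ∑ a : Fin B,
        treeValue B R (πt t) (H - h - 1) (optPath B act h ++ [a]) *
          (detPolicy B act (optPath B act h) a - πt t (optPath B act h) a) := by
  rw [Finset.sum_comm]
  exact Finset.sum_congr rfl (fun t _ => perPolicy B H R act (πt t))
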